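/- Let D be an integral domain with fraction field K and let A ∈ D^{n×n} admit a permutation-free LD⁻¹U decomposition A = L · D_g^{−1} · U. Then for all indices 1 ≤ j ≤ k ≤ n, the entry L_{kj} equals the determinant of the j×j matrix whose first j−1 rows are the entries A_{s,t} for 1 ≤ s ≤ j−1, 1 ≤ t ≤ j, and whose last row is (A_{k,1}, …, A_{k,j}); that is, L_{kj} is the j×j minor of A taken from rows 1,…,j−1,k and columns 1,…,j. -/

import Mathlib

/-- The diagonal matrix `D_g = diag(p₁, p₁p₂, p₂p₃, …, p_{n−1}p_n)` built from the
pivots `p : Fin n → D`. -/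
def bareissDiag {D : Type*} [CommRing D] {n : ℕ} (p : Fin n → D) :
    Matrix (Fin n) (Fin n) D :=
  Matrix.diagonal fun i =>
    (if (i : ℕ) = 0 then 1
      else p ⟨(i : ℕ) - 1, lt_of_le_of_lt (Nat.sub_le _ _) i.isLt⟩) * p i

/-!
Put `Y = D_g⁻¹ U`; it is upper triangular with diagonal entries `1 / p_{i-1}` (where
`p_{-1} = 1`), and `A = L Y`. Because `Y` is upper triangular, the minor of `A` on rows
`0, …, j-1, k` and columns `0, …, j` only involves the first `j + 1` columns of `L`, so it
factors as the corresponding minor of `L` times the leading `(j+1)`-block of `Y`. The former is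
lower triangular with determinant `p_0 ⋯ p_{j-1} · L_{kj}`, the latter upper triangular with
determinant `(p_0 ⋯ p_{j-1})⁻¹`.
-/

open Matrix

def prevPivot {R : Type*} [One R] {n : ℕ} (p : Fin n → R) (i : Fin n) : R :=
  if (i : ℕ) = 0 then 1 else p ⟨(i : ℕ) - 1, lt_of_le_of_lt (Nat.sub_le _ _) i.isLt⟩

theorem prevPivot_ne_zero {M : Type*} [MulZeroOneClass M] [NeZero (1 : M)] {n : ℕ}
    {p : Fin n → M} (hp : ∀ i, p i ≠ 0) (i : Fin n) : prevPivot p i ≠ 0 := by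
  unfold prevPivot
  split_ifs
  exacts [one_ne_zero, hp _]

theorem prod_prevPivot_castLE {M : Type*} [CommMonoid M] {n m : ℕ} (h : m + 1 ≤ n)
    (p : Fin n → M) :
    ∏ t : Fin (m + 1), prevPivot p (Fin.castLE h t) =
      ∏ s : Fin m, p (Fin.castLE (Nat.le_of_succ_le h) s) := by
  rw [Fin.prod_univ_succ]
  simp only [prevPivot, Fin.val_castLE, Fin.val_zero, if_true, one_mul, Fin.val_succ,
    Nat.add_one_ne_zero, if_false, Nat.add_sub_cancel]
  rfl

theorem bareissDiag_eq_diagonal {R : Type*} [CommRing R] {n : ℕ} (p : Fin n → R) :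
    bareissDiag p = diagonal fun i => prevPivot p i * p i :=
  rfl

theorem bareissDiag_map {R S : Type*} [CommRing R] [CommRing S] (f : R →+* S) {n : ℕ}
    (p : Fin n → R) : (bareissDiag p).map f = bareissDiag (f ∘ p) := by
  simp only [bareissDiag_eq_diagonal, diagonal_map (map_zero f), map_mul, prevPivot,
    apply_ite f, map_one, Function.comp_apply]

section Field

variable {K : Type*} [Field K] {n : ℕ}

theorem inv_bareissDiag {p : Fin n → K} (hp : ∀ i, p i ≠ 0) :
    (bareissDiag p)⁻¹ = diagonal fun i => (prevPivot p i * p i)⁻¹ := by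
  refine inv_eq_left_inv ?_
  rw [bareissDiag_eq_diagonal, diagonal_mul_diagonal, ← diagonal_one]
  exact congrArg diagonal <| funext fun i =>
    inv_mul_cancel₀ (mul_ne_zero (prevPivot_ne_zero hp i) (hp i))

theorem inv_bareissDiag_mul_isUpperTriangular {U : Matrix (Fin n) (Fin n) K}
    (hU : U.IsUpperTriangular) (p : Fin n → K) :
    ((bareissDiag p)⁻¹ * U).IsUpperTriangular := by
  rw [bareissDiag_eq_diagonal, inv_diagonal]
  exact (blockTriangular_diagonal _).mul hU

theorem inv_bareissDiag_mul_apply_self {U : Matrix (Fin n) (Fin n) K} {p : Fin n → K}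
    (hp : ∀ i, p i ≠ 0) (hdiag : ∀ i, U i i = p i) (i : Fin n) :
    ((bareissDiag p)⁻¹ * U) i i = (prevPivot p i)⁻¹ := by
  rw [inv_bareissDiag hp, diagonal_mul, hdiag, mul_inv, mul_assoc, inv_mul_cancel₀ (hp i),
    mul_one]

theorem det_submatrix_castLE_inv_bareissDiag_mul {m : ℕ} (h : m + 1 ≤ n)
    {U : Matrix (Fin n) (Fin n) K} (hU : U.IsUpperTriangular) {p : Fin n → K}
    (hp : ∀ i, p i ≠ 0) (hdiag : ∀ i, U i i = p i) :
    (((bareissDiag p)⁻¹ * U).submatrix (Fin.castLE h) (Fin.castLE h)).det =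
      (∏ s : Fin m, p (Fin.castLE (Nat.le_of_succ_le h) s))⁻¹ := by
  have hY :
      (((bareissDiag p)⁻¹ * U).submatrix (Fin.castLE h) (Fin.castLE h)).IsUpperTriangular :=
    fun _ _ hab => inv_bareissDiag_mul_isUpperTriangular hU p hab
  rw [det_of_isUpperTriangular hY, ← prod_prevPivot_castLE h, ← Finset.prod_inv_distrib]
  exact Finset.prod_congr rfl fun _ _ => inv_bareissDiag_mul_apply_self hp hdiag _

end Field

theorem Matrix.submatrix_mul_castLE_of_isUpperTriangular {l m R : Type*}
    [NonUnitalNonAssocSemiring R] {n k : ℕ} (h : k ≤ n) (X : Matrix m (Fin n) R)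
    {Y : Matrix (Fin n) (Fin n) R} (hY : Y.IsUpperTriangular) (row : l → m) :
    (X * Y).submatrix row (Fin.castLE h) =
      X.submatrix row (Fin.castLE h) * Y.submatrix (Fin.castLE h) (Fin.castLE h) := by
  ext s t
  simp only [submatrix_apply, mul_apply]
  refine (Finset.sum_of_injOn (Fin.castLE h) (Fin.castLE_injective h).injOn
    (fun _ _ => Finset.mem_coe.2 (Finset.mem_univ _)) (fun r _ hr => ?_) fun _ _ => rfl).symm
  have hkr : k ≤ (r : ℕ) := by
    by_contra! hrk
    exact hr ⟨⟨r, hrk⟩, Finset.mem_coe.2 (Finset.mem_univ _), rfl⟩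
  have hlt : id (Fin.castLE h t) < id r := Fin.lt_def.2 (lt_of_lt_of_le t.isLt hkr)
  rw [hY hlt, mul_zero]

def minorRows {n : ℕ} (j k : Fin n) : Fin ((j : ℕ) + 1) → Fin n :=
  fun s => if (s : ℕ) < (j : ℕ) then Fin.castLE j.isLt s else k

theorem det_submatrix_minorRows_of_isLowerTriangular {R : Type*} [CommRing R] {n : ℕ}
    {L : Matrix (Fin n) (Fin n) R} (hL : L.IsLowerTriangular) (j k : Fin n) :
    (L.submatrix (minorRows j k) (Fin.castLE j.isLt)).det =
      (∏ s : Fin j, L (Fin.castLE j.isLt.le s) (Fin.castLE j.isLt.le s)) * L k j := by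
  rw [det_of_isLowerTriangular, Fin.prod_univ_castSucc]
  · have hlast : minorRows j k (Fin.last j) = k := if_neg (lt_irrefl _)
    simp only [submatrix_apply, hlast]
    congr 1
    refine Finset.prod_congr rfl fun s _ => ?_
    rw [minorRows, if_pos (show (s.castSucc : ℕ) < j from s.isLt)]
    rfl
  · intro a b hab
    have hab : a < b := hab
    have ha : (a : ℕ) < j := lt_of_lt_of_le hab (Nat.lt_succ_iff.mp b.isLt)
    rw [submatrix_apply, minorRows, if_pos ha]
    exact hL (show OrderDual.toDual (Fin.castLE j.isLt b) <
      OrderDual.toDual (Fin.castLE j.isLt a) from hab)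

theorem stmt3_general {D K : Type*} [CommRing D] [Field K] [Algebra D K]
    [IsFractionRing D K] {n : ℕ} (A L U : Matrix (Fin n) (Fin n) D)
    (hL : ∀ i j : Fin n, (i : ℕ) < (j : ℕ) → L i j = 0)
    (hU : ∀ i j : Fin n, (j : ℕ) < (i : ℕ) → U i j = 0)
    (hdiag : ∀ i : Fin n, U i i = L i i)
    (hp : ∀ i : Fin n, L i i ≠ 0)
    (hA : A.map (algebraMap D K) =
      L.map (algebraMap D K) *
        ((bareissDiag fun i : Fin n => L i i).map (algebraMap D K))⁻¹ *
        U.map (algebraMap D K))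
    (k j : Fin n) :
    L k j = (Matrix.of fun s t : Fin ((j : ℕ) + 1) =>
      A (if (s : ℕ) < (j : ℕ) then Fin.castLE j.isLt s else k)
        (Fin.castLE j.isLt t)).det := by
  set f := algebraMap D K
  have hf : Function.Injective f := IsFractionRing.injective D K
  set p : Fin n → K := fun i => f (L i i)
  have hpK : ∀ i, p i ≠ 0 := fun i => (map_ne_zero_iff f hf).2 (hp i)
  have hLK : (L.map f).IsLowerTriangular := fun a b hab => by simp [hL a b hab]
  have hUK : (U.map f).IsUpperTriangular := fun a b hab => by simp [hU a b hab]
  have hAK : A.map f = L.map f * ((bareissDiag p)⁻¹ * U.map f) := by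
    rw [hA, bareissDiag_map, mul_assoc]
    rfl
  have hprod : ∏ s : Fin j, p (Fin.castLE j.isLt.le s) ≠ 0 :=
    Finset.prod_ne_zero_iff.2 fun _ _ => hpK _
  apply hf
  calc f (L k j)
      = (∏ s : Fin j, p (Fin.castLE j.isLt.le s)) * f (L k j) *
          (∏ s : Fin j, p (Fin.castLE j.isLt.le s))⁻¹ := by field_simp
    _ = ((A.map f).submatrix (minorRows j k) (Fin.castLE j.isLt)).det := by
      rw [hAK, submatrix_mul_castLE_of_isUpperTriangular _ _
        (inv_bareissDiag_mul_isUpperTriangular hUK p), det_mul,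
        det_submatrix_minorRows_of_isLowerTriangular hLK,
        det_submatrix_castLE_inv_bareissDiag_mul j.isLt hUK hpK fun i => congrArg f (hdiag i)]
      rfl
    _ = _ := (RingHom.map_det f _).symm

/-- In a permutation-free `L D⁻¹ U` decomposition `A = L · D_g⁻¹ · U`
over the fraction field, for `j ≤ k` the entry `L k j` is the minor of `A` formed from
rows `0, …, j-1, k` and columns `0, …, j` (0-indexed). -/
theorem stmt3 {D K : Type*} [CommRing D] [IsDomain D] [Field K] [Algebra D K]
    [IsFractionRing D K] {n : ℕ} (A L U : Matrix (Fin n) (Fin n) D)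
    (hL : ∀ i j : Fin n, (i : ℕ) < (j : ℕ) → L i j = 0)
    (hU : ∀ i j : Fin n, (j : ℕ) < (i : ℕ) → U i j = 0)
    (hdiag : ∀ i : Fin n, U i i = L i i)
    (hp : ∀ i : Fin n, L i i ≠ 0)
    (hA : A.map (algebraMap D K) =
      L.map (algebraMap D K) *
        ((bareissDiag fun i : Fin n => L i i).map (algebraMap D K))⁻¹ *
        U.map (algebraMap D K))
    (k j : Fin n) (hjk : j ≤ k) :
    L k j = (Matrix.of fun s t : Fin ((j : ℕ) + 1) =>
      A (if (s : ℕ) < (j : ℕ) then Fin.castLE j.isLt s else k)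
        (Fin.castLE j.isLt t)).det :=
  stmt3_general A L U hL hU hdiag hp hA k j
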